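/- For every real x ≥ 1 the series Σ_{n=0}^∞ S(√x; n) converges and its sum equals M(x) = Σ_{m ∈ ℕ, m ≤ √x} r₂(m)·(x − m²)^{1/2}. -/

import Mathlib

/-!
Write `u = √x` and `t = u - m`. Since `Cₙ = √2 · (-1/2)ⁿ · (1/2 choose n)`, the `n`-th term
`Cₙ x^{1/4-n/2} t^{n+1/2}` of the `m`-th summand equals `√(2ut) · (1/2 choose n) · (-t/(2u))ⁿ`.
As `0 ≤ t/(2u) < 1`, the sum over `n` is the binomial series
`√(2ut) · √(1 - t/(2u)) = √(t (u + m)) = √(x - m²)`, and the finite sum over `m` commutes with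
the sum over `n`.
-/

open Real

/-- `r₂(m)`: the number of representations of `m` as a sum of two squares of integers. -/
noncomputable def r2 (m : ℕ) : ℕ :=
  Set.ncard {p : ℤ × ℤ | p.1 ^ 2 + p.2 ^ 2 = (m : ℤ)}

/-- The coefficients `C₀ = √2` and `Cₙ = −(1/(√2·2ⁿ·n))·∏_{k=1}^{n−1}(1 − 1/(2k))` for `n ≥ 1`. -/
noncomputable def Ccoef (n : ℕ) : ℝ :=
  if n = 0 then Real.sqrt 2
  else -(1 / (Real.sqrt 2 * 2 ^ n * n)) * ∏ k ∈ Finset.Icc 1 (n - 1), (1 - 1 / (2 * (k : ℝ)))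

/-- `S(√x; n) = Cₙ·x^{1/4−n/2}·Σ_{m ∈ ℕ, m ≤ √x} r₂(m)·(√x − m)^{n+1/2}`. -/
noncomputable def Sxn (x : ℝ) (n : ℕ) : ℝ :=
  Ccoef n * x ^ ((1 : ℝ) / 4 - n / 2) *
    ∑ m ∈ Finset.range (⌊Real.sqrt x⌋₊ + 1),
      (r2 m : ℝ) * (Real.sqrt x - m) ^ ((n : ℝ) + 1 / 2)

/-- `M(x) = Σ_{m ∈ ℕ, m ≤ √x} r₂(m)·(x − m²)^{1/2}`. -/
noncomputable def M (x : ℝ) : ℝ :=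
  ∑ m ∈ Finset.range (⌊Real.sqrt x⌋₊ + 1),
    (r2 m : ℝ) * (x - (m : ℝ) ^ 2) ^ ((1 : ℝ) / 2)

theorem Ring.choose_succ_right_eq {K : Type*} [Field K] [CharZero K] (a : K) (n : ℕ) :
    Ring.choose a (n + 1) * (n + 1) = Ring.choose a n * (a - n) := by
  simp only [Ring.choose_eq_smul, smul_eq_mul, descPochhammer_succ_right, Polynomial.smeval_mul,
    Polynomial.smeval_sub, Polynomial.smeval_X, Polynomial.smeval_natCast, Nat.factorial_succ]
  push_cast
  have hfact := Nat.factorial_ne_zero n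
  field_simp
  simp

theorem Ring.choose_one_half_succ (n : ℕ) :
    Ring.choose (1 / 2 : ℝ) (n + 1) =
      (-1) ^ n / (2 * (n + 1)) * ∏ k ∈ Finset.Icc 1 n, (1 - 1 / (2 * (k : ℝ))) := by
  induction n with
  | zero => simp
  | succ n ih =>
    have h := Ring.choose_succ_right_eq (1 / 2 : ℝ) (n + 1)
    rw [ih] at h
    rw [Finset.prod_Icc_succ_top (by omega), eq_div_of_mul_eq (by positivity) h]
    push_cast
    field_simp
    ring

theorem Real.hasSum_choose_mul_pow {a y : ℝ} (hy : |y| < 1) :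
    HasSum (fun n => Ring.choose a n * y ^ n) ((1 + y) ^ a) := by
  have := one_add_rpow_hasFPowerSeriesOnBall_zero (a := a) |>.hasSum
    (y := y) (by simpa [edist_dist, Real.dist_eq] using hy)
  simpa [FormalMultilinearSeries.ofScalars, binomialSeries] using this

theorem Ccoef_eq_choose (n : ℕ) : Ccoef n = √2 * (-1 / 2) ^ n * Ring.choose (1 / 2 : ℝ) n := by
  cases n with
  | zero => simp [Ccoef]
  | succ n =>
    have hsq : √2 ^ 2 = 2 := Real.sq_sqrt (by norm_num)
    have hsign : (-1 : ℝ) ^ n * (-1) ^ n = 1 := by rw [← mul_pow]; norm_num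
    simp only [Ccoef, Nat.succ_ne_zero, if_false, Nat.add_sub_cancel, Ring.choose_one_half_succ,
      div_pow]
    generalize ∏ k ∈ Finset.Icc 1 n, (1 - 1 / (2 * (k : ℝ))) = P
    push_cast
    field_simp
    linear_combination (P * (-1) ^ n * (-1) ^ n) * hsq + (2 * P) * hsign

theorem hasSum_Ccoef_mul_rpow {x m : ℝ} (hx : 0 < x) (hm₀ : -√x < m) (hm : m ≤ √x) :
    HasSum (fun n : ℕ => Ccoef n * x ^ ((1 : ℝ) / 4 - n / 2) * (√x - m) ^ ((n : ℝ) + 1 / 2))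
      ((x - m ^ 2) ^ ((1 : ℝ) / 2)) := by
  set u := √x with hu
  have hu₀ : 0 < u := Real.sqrt_pos.2 hx
  have ht : 0 ≤ u - m := by linarith
  have hz : |-((u - m) / (2 * u))| < 1 := by
    rw [abs_neg, abs_of_nonneg (by positivity), div_lt_one (by positivity)]
    linarith
  have hterm (n : ℕ) : Ccoef n * x ^ ((1 : ℝ) / 4 - n / 2) * (u - m) ^ ((n : ℝ) + 1 / 2) =
      √2 * √u * √(u - m) * (Ring.choose (1 / 2 : ℝ) n * (-((u - m) / (2 * u))) ^ n) := by
    rw [show (1 / 4 : ℝ) - n / 2 = (1 / 2 - n) / 2 by ring, Real.rpow_div_two_eq_sqrt _ hx.le,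
      Real.rpow_sub hu₀, Real.rpow_add' ht (by positivity), Real.rpow_natCast, Real.rpow_natCast,
      ← Real.sqrt_eq_rpow, ← Real.sqrt_eq_rpow, Ccoef_eq_choose,
      show -((u - m) / (2 * u)) = -1 / 2 * (u - m) / u by ring, div_pow (-1 / 2 * (u - m)), mul_pow]
    field_simp
  have hsum : √2 * √u * √(u - m) * (1 + -((u - m) / (2 * u))) ^ (1 / 2 : ℝ) =
      (x - m ^ 2) ^ ((1 : ℝ) / 2) := by
    have hx' : x - m ^ 2 = 2 * u * (u - m) * (1 + -((u - m) / (2 * u))) := by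
      rw [← Real.sq_sqrt hx.le, ← hu]
      field_simp
      ring
    rw [hx', ← Real.sqrt_eq_rpow, ← Real.sqrt_eq_rpow, Real.sqrt_mul (by positivity),
      Real.sqrt_mul (by positivity), Real.sqrt_mul zero_le_two]
  simpa only [hterm, hsum] using
    (Real.hasSum_choose_mul_pow (a := 1 / 2) hz).mul_left (√2 * √u * √(u - m))

/-- For every `x ≥ 1` the series `Σ_{n=0}^∞ S(√x; n)` converges with sum `M(x)`. -/
theorem hasSum_Sxn_M (x : ℝ) (hx : 1 ≤ x) :
    HasSum (fun n : ℕ => Sxn x n) (M x) := by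
  have hx₀ : 0 < x := by linarith
  have hterm (m : ℕ) (hm : m ∈ Finset.range (⌊√x⌋₊ + 1)) :
      HasSum (fun n : ℕ => (r2 m : ℝ) *
          (Ccoef n * x ^ ((1 : ℝ) / 4 - n / 2) * (√x - m) ^ ((n : ℝ) + 1 / 2)))
        ((r2 m : ℝ) * (x - (m : ℝ) ^ 2) ^ ((1 : ℝ) / 2)) := by
    have hm_le : (m : ℝ) ≤ √x :=
      (Nat.le_floor_iff (Real.sqrt_nonneg x)).1 (Nat.lt_succ_iff.1 (Finset.mem_range.1 hm))
    have hm_gt : -√x < m := by linarith [Real.sqrt_pos.2 hx₀, m.cast_nonneg (α := ℝ)]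
    exact (hasSum_Ccoef_mul_rpow hx₀ hm_gt hm_le).mul_left _
  rw [M]
  convert hasSum_sum hterm using 2 with n
  rw [Sxn, Finset.mul_sum]
  exact Finset.sum_congr rfl fun _ _ => by ring
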